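/- For d ≥ 1, the number of integer lattice points lying in the intersection of a ball of radius r ≥ 1 with an affine hyperplane in ℝ^d is bounded by C r^{d-1}: |ℤ^d ∩ B_r ∩ P| ≤ C r^{d-1}, where C depends only on d. -/
import Mathlib


open scoped BigOperators

/-- **Lattice points in the intersection of a ball and a hyperplane.**
For `d ≥ 1` there is a constant `C > 0` depending only on `d` such that for
every radius `r ≥ 1`, every center `x ∈ ℝ^d`, and every affine hyperplane
`P = {y : ⟨v, y⟩ = c}` (with normal vector `v ≠ 0`), the number of integer
lattice points in `B_r(x) ∩ P` is at most `C r^{d-1}`. -/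
theorem lattice_points_ball_inter_hyperplane (d : ℕ) (hd : 1 ≤ d) :
    ∃ C > 0, ∀ (r : ℝ), 1 ≤ r → ∀ (x : Fin d → ℝ) (v : Fin d → ℝ), v ≠ 0 → ∀ (c : ℝ),
      (Set.ncard {n : Fin d → ℤ |
          (∑ i, ((n i : ℝ) - x i) ^ 2) ≤ r ^ 2 ∧ (∑ i, v i * (n i : ℝ)) = c} : ℝ)
        ≤ C * r ^ (d - 1) := by
  refine ⟨3 ^ (d - 1), by positivity, ?_⟩
  intro r hr x v hv c
  obtain ⟨i, hi⟩ : ∃ i, v i ≠ 0 := Function.ne_iff.mp hv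
  set S : Set (Fin d → ℤ) := {n : Fin d → ℤ |
      (∑ i, ((n i : ℝ) - x i) ^ 2) ≤ r ^ 2 ∧ (∑ i, v i * (n i : ℝ)) = c} with hS
  -- target finset
  set T : Finset ({j : Fin d // j ≠ i} → ℤ) :=
    Fintype.piFinset (fun j : {j : Fin d // j ≠ i} =>
      Finset.Icc ⌈x j - r⌉ ⌊x (j : Fin d) + r⌋) with hT
  have hr0 : (0:ℝ) < r := lt_of_lt_of_le one_pos hr
  -- coordinate bounds for members of S
  have coordbound : ∀ n ∈ S, ∀ j : Fin d,
      ⌈x j - r⌉ ≤ n j ∧ n j ≤ ⌊x j + r⌋ := by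
    intro n hn j
    have hsingle : ((n j : ℝ) - x j) ^ 2 ≤ r ^ 2 := by
      refine le_trans ?_ hn.1
      exact Finset.single_le_sum (f := fun k => ((n k : ℝ) - x k) ^ 2)
        (fun k _ => sq_nonneg _) (Finset.mem_univ j)
    constructor
    · exact Int.ceil_le.mpr (by nlinarith)
    · exact Int.le_floor.mpr (by nlinarith)
  have hmaps : ∀ n ∈ S, (fun j : {j : Fin d // j ≠ i} => n j) ∈ (T : Set _) := by
    intro n hn
    simp only [hT, Finset.mem_coe, Fintype.mem_piFinset]
    intro j
    rcases coordbound n hn j with ⟨h1, h2⟩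
    exact Finset.mem_Icc.mpr ⟨h1, h2⟩
  have hinj : Set.InjOn (fun n : Fin d → ℤ => fun j : {j : Fin d // j ≠ i} => n j) S := by
    intro n hn m hm h
    have heq : ∀ j : Fin d, j ≠ i → n j = m j := by
      intro j hj
      exact congrFun h ⟨j, hj⟩
    have hsum : (∑ k, v k * (n k : ℝ)) = ∑ k, v k * (m k : ℝ) := by
      rw [hn.2, hm.2]
    have hsplitn : (∑ k, v k * (n k : ℝ)) =
        v i * (n i : ℝ) + ∑ k ∈ Finset.univ.erase i, v k * (n k : ℝ) :=
      (Finset.add_sum_erase _ _ (Finset.mem_univ i)).symm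
    have hsplitm : (∑ k, v k * (m k : ℝ)) =
        v i * (m i : ℝ) + ∑ k ∈ Finset.univ.erase i, v k * (m k : ℝ) :=
      (Finset.add_sum_erase _ _ (Finset.mem_univ i)).symm
    have herase : (∑ k ∈ Finset.univ.erase i, v k * (n k : ℝ)) =
        ∑ k ∈ Finset.univ.erase i, v k * (m k : ℝ) := by
      refine Finset.sum_congr rfl fun k hk => ?_
      rw [heq k (Finset.ne_of_mem_erase hk)]
    have : v i * (n i : ℝ) = v i * (m i : ℝ) := by
      rw [hsplitn, hsplitm, herase] at hsum
      linarith
    have hni : (n i : ℝ) = (m i : ℝ) := mul_left_cancel₀ hi this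
    have hni' : n i = m i := by exact_mod_cast hni
    funext j
    by_cases hj : j = i
    · rw [hj]; exact hni'
    · exact heq j hj
  have hcard : S.ncard ≤ T.card := by
    have := Set.ncard_le_ncard_of_injOn _ hmaps hinj (T.finite_toSet)
    rwa [Set.ncard_coe_finset] at this
  -- bound T.card
  have hTcard : (T.card : ℝ) ≤ (3 * r) ^ (d - 1) := by
    have hcardsub : Fintype.card {j : Fin d // j ≠ i} = d - 1 := by
      rw [Fintype.card_subtype_compl, Fintype.card_fin, Fintype.card_subtype_eq]
    rw [hT, Fintype.card_piFinset]
    push_cast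
    calc (∏ j : {j : Fin d // j ≠ i}, ((Finset.Icc ⌈x j - r⌉ ⌊x (j:Fin d) + r⌋).card : ℝ))
        ≤ ∏ j : {j : Fin d // j ≠ i}, (3 * r) := by
          refine Finset.prod_le_prod (fun j _ => by positivity) (fun j _ => ?_)
          rw [Int.card_Icc]
          have h1 : (⌊x (j:Fin d) + r⌋ + 1 - ⌈x (j:Fin d) - r⌉ : ℝ) ≤ 3 * r := by
            have hf : (⌊x (j:Fin d) + r⌋ : ℝ) ≤ x j + r := Int.floor_le _
            have hc : x j - r ≤ (⌈x (j:Fin d) - r⌉ : ℝ) := Int.le_ceil _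
            linarith
          rcases le_or_gt (⌊x (j:Fin d) + r⌋ + 1 - ⌈x (j:Fin d) - r⌉) 0 with h | h
          · rw [Int.toNat_of_nonpos h]
            norm_num
            positivity
          · have h2 : (((⌊x (j:Fin d) + r⌋ + 1 - ⌈x (j:Fin d) - r⌉).toNat : ℤ) : ℝ) ≤ 3 * r := by
              rw [Int.toNat_of_nonneg h.le]; exact_mod_cast h1
            exact_mod_cast h2
      _ = (3 * r) ^ (d - 1) := by
          rw [Finset.prod_const, Finset.card_univ, hcardsub]
  calc (S.ncard : ℝ) ≤ (T.card : ℝ) := by exact_mod_cast hcard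
    _ ≤ (3 * r) ^ (d - 1) := hTcard
    _ = 3 ^ (d - 1) * r ^ (d - 1) := mul_pow _ _ _
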